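/- arXiv:1511.09194 — 2 statements merged into one kernel-verified Lean document; each statement's English description precedes it below -/
import Mathlib

section
/- Let σ be a primitive substitution, β an eigenvalue of its matrix M with |β| > 1 such that β/|β| is not a root of unity, and γ a nonzero eigenvector for β. For any a ∈ 𝒜, if x ∈ 𝒮_a is eventually periodic (there exist n₀ ≥ 0 and q ≥ 1 with (p_{n₀+kq+m}^x, c_{n₀+kq+m}^x, s_{n₀+kq+m}^x) independent of k ≥ 0 for each 1 ≤ m ≤ q), then z_a(x) is not an extreme point of 𝔉_a for any direction τ ∈ S¹, i.e. z_a(x) ∉ E_a(τ) for all τ ∈ S¹. -/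
open Complex MeasureTheory Filter Set
open scoped BigOperators

noncomputable section

namespace IEMWandering

/-- The half-open unit interval `[0,1)`. -/
def unitIvl : Set ℝ := Set.Ico (0:ℝ) 1

/-- An interval exchange map on `[0,1)`: a bijection of `[0,1)` that is a translation
on each member of a finite partition of `[0,1)` into half-open intervals. -/
structure IEM (A : Type) [Fintype A] where
  T : ℝ → ℝ
  I : A → Set ℝ
  δ : A → ℝ
  isIco : ∀ a, ∃ l u : ℝ, l < u ∧ I a = Set.Ico l u
  subset_unit : ∀ a, I a ⊆ unitIvl
  partition : ∀ t ∈ unitIvl, ∃! a, t ∈ I a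
  translate : ∀ a, ∀ t ∈ I a, T t = t + δ a
  bijOn : Set.BijOn T unitIvl unitIvl

/-- `substIter σ n a = σⁿ(a)`. -/
def substIter {A : Type} (σ : A → List A) : ℕ → A → List A
  | 0, a => [a]
  | n+1, a => ((σ a).map (substIter σ n)).flatten

/-- Applying a substitution to a word. -/
def substW {A : Type} (σ : A → List A) (w : List A) : List A := (w.map σ).flatten

/-- `substIterW σ k w = σᵏ(w)`. -/
def substIterW {A : Type} (σ : A → List A) (k : ℕ) (w : List A) : List A :=
  (substW σ)^[k] w

/-- A substitution is primitive if some power of it maps every letter to a word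
containing every letter. -/
def Primitive {A : Type} (σ : A → List A) : Prop :=
  ∃ n : ℕ, ∀ a b : A, a ∈ substIter σ n b

/-- The matrix `M` of a substitution: `M a b` = number of occurrences of `b` in `σ a`. -/
def substMatrix {A : Type} [Fintype A] [DecidableEq A] (σ : A → List A) :
    Matrix A A ℂ := fun a b => ((σ a).count b : ℂ)

/-- `γ(w) = γ_{w_0} + … + γ_{w_{n-1}}`. -/
def wordSum {A : Type} (γ : A → ℂ) (w : List A) : ℂ := (w.map γ).sum

/-- `γ` is an eigenvector of the substitution matrix for the eigenvalue `β`. -/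
def IsEigenvector {A : Type} [Fintype A] [DecidableEq A] (σ : A → List A) (β : ℂ)
    (γ : A → ℂ) : Prop :=
  γ ≠ 0 ∧ (substMatrix σ).mulVec γ = β • γ

/-- `z` is not a root of unity. -/
def NotRootOfUnity (z : ℂ) : Prop := ∀ n : ℕ, 0 < n → z ^ n ≠ 1

/-- `β/|β|`. -/
def unitDir (β : ℂ) : ℂ := β / ((‖β‖ : ℝ) : ℂ)

/-- A self-similar interval exchange map, together with its renormalization ratio `α`
and its associated substitution `σ`: the first-return map of `T` to `[0,α)`, rescaled
by `α⁻¹`, equals `T`; `(σ a).length` is the first return time `r_a` of `α I_a` to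
`[0,α)` and `T^[m] (α I_a) ⊆ I_{(σ a)_m}` for `m < r_a`. -/
structure SelfSimilarIEM (A : Type) [Fintype A] extends IEM A where
  α : ℝ
  α_pos : 0 < α
  α_lt_one : α < 1
  σ : A → List A
  σ_ne : ∀ a, σ a ≠ []
  visits : ∀ a, ∀ t ∈ I a, ∀ (m : ℕ) (h : m < (σ a).length),
    T^[m] (α * t) ∈ I ((σ a).get ⟨m, h⟩)
  not_first_return : ∀ a, ∀ t ∈ I a, ∀ k : ℕ, 0 < k → k < (σ a).length →
    T^[k] (α * t) ∉ Set.Ico (0:ℝ) α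
  self_similar : ∀ a, ∀ t ∈ I a, T^[(σ a).length] (α * t) = α * T t

/-- An affine interval exchange map on `[0,1)` with positive slopes. -/
structure AffineIEM (A : Type) [Fintype A] where
  f : ℝ → ℝ
  J : A → Set ℝ
  slope : A → ℝ
  intercept : A → ℝ
  slope_pos : ∀ a, 0 < slope a
  isIco : ∀ a, ∃ l u : ℝ, l < u ∧ J a = Set.Ico l u
  subset_unit : ∀ a, J a ⊆ unitIvl
  partition : ∀ t ∈ unitIvl, ∃! a, t ∈ J a
  affine : ∀ a, ∀ t ∈ J a, f t = slope a * t + intercept a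
  bijOn : Set.BijOn f unitIvl unitIvl

/-- `h` realizes a semi-conjugacy from `f` to `T`:
it is continuous, surjective, nondecreasing and `h ∘ f = T ∘ h` on `[0,1)`. -/
def SemiConjWith (T f h : ℝ → ℝ) : Prop :=
  ContinuousOn h unitIvl ∧ Set.SurjOn h unitIvl unitIvl ∧ MonotoneOn h unitIvl ∧
    Set.MapsTo h unitIvl unitIvl ∧ ∀ t ∈ unitIvl, h (f t) = T (h t)

/-- `f` is semi-conjugate with `T`. -/
def SemiConjugate (T f : ℝ → ℝ) : Prop := ∃ h, SemiConjWith T f h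

/-- `f` has a wandering interval: a nondegenerate interval whose forward iterates
are pairwise disjoint. -/
def HasWanderingInterval (f : ℝ → ℝ) : Prop :=
  ∃ u v : ℝ, u < v ∧ Set.Ico u v ⊆ unitIvl ∧
    ∀ m n : ℕ, m ≠ n → Disjoint (f^[m] '' Set.Ico u v) (f^[n] '' Set.Ico u v)

/-- Membership in the substitution subshift `Ω_σ`: every finite subword of `ω`
occurs in some `σⁿ(a)`. -/
def InOmega {A : Type} (σ : A → List A) (ω : ℤ → A) : Prop :=
  ∀ (m : ℤ) (len : ℕ), ∃ (n : ℕ) (a : A),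
    (List.ofFn fun i : Fin len => ω (m + (i.val : ℤ))) <:+: substIter σ n a

/-- The word `ω_n … ω_m`. -/
def segment {A : Type} (ω : ℤ → A) (n m : ℤ) : List A :=
  List.ofFn fun i : Fin (m - n + 1).toNat => ω (n + (i.val : ℤ))

/-- `γ_n(ω)`: the Birkhoff-like sums of `γ` along `ω`. -/
def gammaZ {A : Type} (γ : A → ℂ) (ω : ℤ → A) (n : ℤ) : ℂ :=
  if 0 ≤ n then ∑ i ∈ Finset.range n.toNat, γ (ω (i : ℤ))
  else -∑ i ∈ Finset.range (-n).toNat, γ (ω (n + (i : ℤ)))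

/-- `ω` is a minimal sequence for `γ`. -/
def MinimalSeq {A : Type} (σ : A → List A) (γ : A → ℂ) (ω : ℤ → A) : Prop :=
  InOmega σ ω ∧ ∀ n : ℤ, 0 ≤ (gammaZ γ ω n).re

/-- Triples `(p, c, s)` of a prefix, a central letter and a suffix. -/
abbrev Triple (A : Type) := List A × A × List A

/-- The set `𝒮_a` of reversed prefix-suffix expansions at `a` (indexed from `0`,
so `x m` is the triple `(p_{m+1}, c_{m+1}, s_{m+1})`). -/
def InS {A : Type} (σ : A → List A) (a : A) (x : ℕ → Triple A) : Prop :=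
  σ a = (x 0).1 ++ (x 0).2.1 :: (x 0).2.2 ∧
  ∀ m : ℕ, σ ((x m).2.1) = (x (m+1)).1 ++ (x (m+1)).2.1 :: (x (m+1)).2.2

/-- `z_a(x) = Σ_{m≥1} β^{-m} γ(p_m)`. -/
def zrep {A : Type} (β : ℂ) (γ : A → ℂ) (x : ℕ → Triple A) : ℂ :=
  ∑' m : ℕ, β⁻¹ ^ (m + 1) * wordSum γ (x m).1

/-- `z_a^{(n)}(x) = Σ_{m=1}^n β^{-m} γ(p_m)`. -/
def zrepN {A : Type} (β : ℂ) (γ : A → ℂ) (n : ℕ) (x : ℕ → Triple A) : ℂ :=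
  ∑ m ∈ Finset.range n, β⁻¹ ^ (m + 1) * wordSum γ (x m).1

/-- The fractal `𝔉_a`. -/
def Frac {A : Type} (σ : A → List A) (β : ℂ) (γ : A → ℂ) (a : A) : Set ℂ :=
  { z | ∃ x, InS σ a x ∧ zrep β γ x = z }

/-- The finite approximation `𝔉_a^{(n)}`. -/
def FracN {A : Type} (σ : A → List A) (β : ℂ) (γ : A → ℂ) (n : ℕ) (a : A) : Set ℂ :=
  { z | ∃ x, InS σ a x ∧ zrepN β γ n x = z }

/-- `v_a(τ) = min_{z ∈ 𝔉_a} Re(τ z)`. -/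
def vDir {A : Type} (σ : A → List A) (β : ℂ) (γ : A → ℂ) (a : A) (τ : ℂ) : ℝ :=
  sInf ((fun z => (τ * z).re) '' Frac σ β γ a)

/-- `v_a^{(n)}(τ) = min_{z ∈ 𝔉_a^{(n)}} Re(τ z)`. -/
def vDirN {A : Type} (σ : A → List A) (β : ℂ) (γ : A → ℂ) (n : ℕ) (a : A) (τ : ℂ) : ℝ :=
  sInf ((fun z => (τ * z).re) '' FracN σ β γ n a)

/-- The set `E_a(τ)` of extreme points of `𝔉_a` in direction `τ`. -/
def ExtPts {A : Type} (σ : A → List A) (β : ℂ) (γ : A → ℂ) (a : A) (τ : ℂ) : Set ℂ :=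
  { z ∈ Frac σ β γ a | (τ * z).re = vDir σ β γ a τ }

/-- The set `E_a^{(n)}(τ)`. -/
def ExtPtsN {A : Type} (σ : A → List A) (β : ℂ) (γ : A → ℂ) (n : ℕ) (a : A) (τ : ℂ) : Set ℂ :=
  { z ∈ FracN σ β γ n a | (τ * z).re = vDirN σ β γ n a τ }

/-- The unique representation property: every extreme point of every fractal `𝔉_a`
has a unique representation in `𝒮_a`. -/
def URP {A : Type} (σ : A → List A) (β : ℂ) (γ : A → ℂ) : Prop :=
  ∀ (a : A) (τ : ℂ), ‖τ‖ = 1 →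
    ∀ z ∈ ExtPts σ β γ a τ, ∀ x y : ℕ → Triple A,
      InS σ a x → zrep β γ x = z → InS σ a y → zrep β γ y = z → x = y

/-- `(p,c,s)` is a decomposition of `σ(a)`. -/
def IsDecomp {A : Type} (σ : A → List A) (a : A) (d : Triple A) : Prop :=
  σ a = d.1 ++ d.2.1 :: d.2.2

/-- The subfractal `𝔉_{a,(p,c,s)}`: values of representations starting with `(p,c,s)`. -/
def FracDec {A : Type} (σ : A → List A) (β : ℂ) (γ : A → ℂ) (a : A) (d : Triple A) :
    Set ℂ := { z | ∃ x, InS σ a x ∧ x 0 = d ∧ zrep β γ x = z }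

/-- `v_{a,(p,c,s)}(τ)`. -/
def vDec {A : Type} (σ : A → List A) (β : ℂ) (γ : A → ℂ) (a : A) (d : Triple A)
    (τ : ℂ) : ℝ := sInf ((fun z => (τ * z).re) '' FracDec σ β γ a d)

/-- `E_{a,(p,c,s)}(τ) = E_a(τ) ∩ 𝔉_{a,(p,c,s)}`. -/
def EDec {A : Type} (σ : A → List A) (β : ℂ) (γ : A → ℂ) (a : A) (d : Triple A)
    (τ : ℂ) : Set ℂ := ExtPts σ β γ a τ ∩ FracDec σ β γ a d

/-- The set `Ψ_a` of directions with extreme points in two distinct subfractals. -/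
def Psi {A : Type} (σ : A → List A) (β : ℂ) (γ : A → ℂ) (a : A) : Set ℂ :=
  { τ | ‖τ‖ = 1 ∧ ∃ d d' : Triple A, d ≠ d' ∧
      IsDecomp σ a d ∧ IsDecomp σ a d' ∧
      EDec σ β γ a d τ ≠ EDec σ β γ a d' τ ∧
      vDir σ β γ a τ = vDec σ β γ a d τ ∧ vDir σ β γ a τ = vDec σ β γ a d' τ }

/-- The natural (arc) distance between two points of the unit circle. -/
def arcDist (τ τ' : ℂ) : ℝ := |Complex.arg (τ / τ')|

/-- A good eigenvector: directions in `Ψ(γ)` are badly approximated by the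
orbit of `β₀ = β/|β|`. -/
def GoodEigenvector {A : Type} [Fintype A] [DecidableEq A] (σ : A → List A) (β : ℂ)
    (γ : A → ℂ) : Prop :=
  ∀ C : ℝ, 1 < C → ∀ τ ∈ ⋃ a : A, Psi σ β γ a,
    0 < Filter.liminf
      (fun n : ℕ => ((C ^ n * arcDist τ ((unitDir β) ^ n) : ℝ) : EReal)) Filter.atTop

/-- The left shift on sequences of triples. -/
def shiftS {A : Type} (x : ℕ → Triple A) : ℕ → Triple A := fun m => x (m + 1)

/-- The set `E_a^*(τ)` of limit extreme points. -/
def LimitExt {A : Type} (σ : A → List A) (β : ℂ) (γ : A → ℂ) (a : A) (τ : ℂ) :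
    Set ℂ :=
  { z | z ∈ ExtPts σ β γ a τ ∧ ∃ x, InS σ a x ∧ zrep β γ x = z ∧
      ∀ j : ℕ, 0 < j → ∃ (aj : A) (y : ℕ → Triple A), InS σ aj y ∧
        zrep β γ y ∈ ExtPts σ β γ aj ((unitDir β) ^ j * τ) ∧
        (y (j - 1)).2.1 = a ∧ (fun m => y (m + j)) = x }

/-- Minimality of an i.e.m.: every (forward) orbit is dense in `[0,1)`. -/
def MinimalIEM {A : Type} [Fintype A] (T : IEM A) : Prop :=
  ∀ t ∈ unitIvl, ∀ s ∈ unitIvl, ∀ ε : ℝ, 0 < ε → ∃ n : ℕ, |T.T^[n] t - s| < ε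

/-- `ω` is the itinerary of a full (two-sided) orbit of `T`. -/
def IsItinerary {A : Type} [Fintype A] (T : IEM A) (ω : ℤ → A) : Prop :=
  ∃ o : ℤ → ℝ, (∀ n, o n ∈ unitIvl) ∧ (∀ n, T.T (o n) = o (n + 1)) ∧
    ∀ n, o n ∈ T.I (ω n)

/-- Membership in `Ω_T`, the closure (in the product topology) of the set of
itineraries of points of `[0,1)` under `T`. -/
def InOmegaT {A : Type} [Fintype A] (T : IEM A) (ω : ℤ → A) : Prop :=
  ∀ N : ℕ, ∃ ω', IsItinerary T ω' ∧ ∀ n : ℤ, |n| ≤ (N : ℤ) → ω' n = ω n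

/-- The orientation-preserving exchange of the two halves of `[t₀, t₁)`. -/
def halfExchange (t₀ t₁ t : ℝ) : ℝ :=
  if t₀ ≤ t ∧ t < (t₀ + t₁) / 2 then t + (t₁ - t₀) / 2
  else if (t₀ + t₁) / 2 ≤ t ∧ t < t₁ then t - (t₁ - t₀) / 2
  else t

/-- The cubic Arnoux–Yoccoz interval exchange map. -/
def AYmap (α : ℝ) : ℝ → ℝ := fun t =>
  halfExchange 0 1 (halfExchange 0 α (halfExchange α (α + α^2)
    (halfExchange (α + α^2) 1 t)))

/-- The cubic Arnoux–Yoccoz substitution on `{1, …, 9}` (letters `0`-indexed):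
`σ(1)=35, σ(2)=45, σ(3)=46, σ(4)=17, σ(5)=18, σ(6)=19, σ(7)=29, σ(8)=2, σ(9)=3`. -/
def AYsub : Fin 9 → List (Fin 9) :=
  ![[2,4],[3,4],[3,5],[0,6],[0,7],[0,8],[1,8],[1],[2]]

/-- The eigenvector of the Arnoux–Yoccoz matrix for the eigenvalue `β`. -/
def AYvec (β : ℂ) : Fin 9 → ℂ :=
  ![β^2+β+1, -β, -β, -β^2-β-1, β+1, β+1, -β^2-β-2, -1, -1]

end IEMWandering


/-!
If `z_a(x)` is extreme in direction `τ`, then the tail `z_{c_n}(Sⁿx)` is extreme in `𝔉_{c_n}` in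
direction `τ β⁻ⁿ`, because `𝔉_a` contains `β⁻¹ (γ(p₁) + 𝔉_{c₁})`. For eventually periodic `x` the
pair `(c_n, Sⁿx)` recurs with period `q`, so a single point of some `𝔉_c` minimises `Re(ρ ηᵏ ·)`
for all `k`, with `η = β^{-q}`. Since `β/|β|` is not a root of unity, the directions `ηᵏ/|η|ᵏ` are
dense in the circle and `𝔉_c` is a point. By primitivity every `𝔉_b` is then a point `w_b`, with
`β w_c = γ(p) + w_b` whenever `σ(c) = p b s`. The first and last letters of `σ(c)` give
`w_{first} = β w_c` and `(w - γ)_{last} = β (w - γ)_c`; on a finite alphabet with `|β| > 1` this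
forces `w = 0` and `γ = 0`.
-/

theorem Function.periodic_of_forall_mul_add_eq {α : Type*} {f : ℕ → α} {q : ℕ} (hq : 0 < q)
    (h : ∀ k m, m < q → f (k * q + m) = f m) : Function.Periodic f q := fun m =>
  calc f (m + q) = f ((m / q + 1) * q + m % q) := congrArg f (by
        rw [add_mul, one_mul, add_right_comm, Nat.div_add_mod'])
    _ = f (m / q * q + m % q) := (h _ _ (Nat.mod_lt m hq)).trans (h _ _ (Nat.mod_lt m hq)).symm
    _ = f m := congrArg f (Nat.div_add_mod' m q)

theorem Circle.denseRange_pow_of_not_isOfFinOrder {ζ : Circle} (hζ : ¬IsOfFinOrder ζ) :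
    DenseRange (ζ ^ · : ℕ → Circle) := by
  have hT : (2 * Real.pi) ≠ 0 := by positivity
  have : Fact (0 < 2 * Real.pi) := ⟨by positivity⟩
  obtain ⟨θ, rfl⟩ := (AddCircle.homeomorphCircle hT).surjective ζ
  rw [AddCircle.homeomorphCircle_apply] at hζ ⊢
  have hθ : addOrderOf θ = 0 := by
    refine addOrderOf_eq_zero_iff.2 fun hfin => hζ ?_
    obtain ⟨n, hn, hnθ⟩ := isOfFinAddOrder_iff_nsmul_eq_zero.1 hfin
    exact isOfFinOrder_iff_pow_eq_one.2 ⟨n, hn, by rw [← AddCircle.toCircle_nsmul, hnθ,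
      AddCircle.toCircle_zero]⟩
  have hz : DenseRange (fun n : ℤ => θ.toCircle ^ n) := by
    have := (AddCircle.homeomorphCircle hT).surjective.denseRange.comp
      (AddCircle.denseRange_zsmul_iff.2 hθ) (AddCircle.homeomorphCircle hT).continuous
    simpa [Function.comp_def, AddCircle.homeomorphCircle_apply, AddCircle.toCircle_zsmul]
      using this
  exact denseRange_zpow_iff_pow.1 hz

theorem Complex.eq_zero_of_forall_circle_re_mul_nonneg {w : ℂ}
    (h : ∀ ξ : Circle, 0 ≤ ((ξ : ℂ) * w).re) : w = 0 := by
  let i : Circle := ⟨Complex.I, by simp [Submonoid.unitSphere]⟩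
  have hi : (i : ℂ) = Complex.I := rfl
  have h1 := h 1
  have h2 := h (-1)
  have h3 := h i
  have h4 := h (-i)
  simp only [Circle.coe_neg, Circle.coe_one, hi, neg_mul, one_mul, Complex.neg_re,
    Complex.I_mul_re] at h1 h2 h3 h4
  exact Complex.ext (by simp only [Complex.zero_re]; linarith)
    (by simp only [Complex.zero_im]; linarith)

namespace IEMWandering

theorem unitDir_pow (z : ℂ) (n : ℕ) : unitDir (z ^ n) = unitDir z ^ n := by
  simp [unitDir, div_pow]

theorem unitDir_inv (z : ℂ) : unitDir z⁻¹ = (unitDir z)⁻¹ := by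
  simp [unitDir, div_eq_inv_mul, mul_comm]

theorem norm_unitDir {z : ℂ} (hz : z ≠ 0) : ‖unitDir z‖ = 1 := by
  simp [unitDir, hz]

theorem eq_zero_of_forall_re_mul_pow_nonneg {ρ η u : ℂ} (hρ : ρ ≠ 0) (hη0 : η ≠ 0)
    (hη : NotRootOfUnity (unitDir η)) (h : ∀ k : ℕ, 0 ≤ (ρ * η ^ k * u).re) : u = 0 := by
  let ζ : Circle := ⟨unitDir η, by simpa [Submonoid.unitSphere] using norm_unitDir hη0⟩
  have hζ : ¬IsOfFinOrder ζ := fun hfin => by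
    obtain ⟨n, hn, hζn⟩ := isOfFinOrder_iff_pow_eq_one.1 hfin
    exact hη n hn (by simpa using congrArg ((↑) : Circle → ℂ) hζn)
  have hη_eq : η = ‖η‖ * unitDir η := by
    simp [unitDir, mul_div_cancel₀, hη0]
  have hscale : ∀ k : ℕ, ρ * η ^ k * u = ((‖η‖ ^ k : ℝ) : ℂ) * ((ζ : ℂ) ^ k * (ρ * u)) := by
    intro k
    conv_lhs => rw [hη_eq]
    push_cast
    ring
  refine (mul_eq_zero.1 (Complex.eq_zero_of_forall_circle_re_mul_nonneg fun ξ => ?_)).resolve_left hρ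
  refine (Circle.denseRange_pow_of_not_isOfFinOrder hζ).induction_on ξ
    (isClosed_le continuous_const (by fun_prop)) fun k => ?_
  have hk := h k
  rw [hscale, Complex.re_ofReal_mul] at hk
  simpa using nonneg_of_mul_nonneg_right hk (by positivity)

section Expansions

variable {A : Type} {σ : A → List A} {β : ℂ} {γ : A → ℂ} {a : A} {x : ℕ → Triple A}

theorem InS.shift (hx : InS σ a x) : InS σ (x 0).2.1 (shiftS x) :=
  ⟨hx.2 0, fun m => hx.2 (m + 1)⟩

theorem InS.cons {p s : List A} {b : A} {y : ℕ → Triple A} (hd : σ a = p ++ b :: s)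
    (hy : InS σ b y) : InS σ a (Stream'.cons (p, b, s) y) :=
  ⟨hd, fun m => m.casesOn hy.1 hy.2⟩

theorem InS.exists_isPrefix (hx : InS σ a x) (m : ℕ) : ∃ c, (x m).1 <+: σ c := by
  cases m with
  | zero => exact ⟨a, _, hx.1.symm⟩
  | succ m => exact ⟨_, _, (hx.2 m).symm⟩

theorem exists_InS (hne : ∀ c, σ c ≠ []) (b : A) : ∃ x, InS σ b x := by
  let g : A → A := fun c => (σ c).head (hne c)
  refine ⟨fun m => ([], g^[m + 1] b, (σ (g^[m] b)).tail), ?_, fun m => ?_⟩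
  · exact (List.cons_head_tail (hne b)).symm
  · simp only [Function.iterate_succ_apply' g (m + 1)]
    exact (List.cons_head_tail (hne _)).symm

theorem shiftS_iterate_apply (n m : ℕ) : (shiftS^[n] x) m = x (m + n) := by
  induction n generalizing x with
  | zero => rfl
  | succ n ih => exact (ih (x := shiftS x)).trans (congrArg x (by omega))

end Expansions

section Fractal

variable {A : Type} [Finite A] {σ : A → List A} {β : ℂ} {γ : A → ℂ} {a : A}
  {x : ℕ → Triple A}

theorem exists_norm_zrep_term_le (σ : A → List A) (β : ℂ) (γ : A → ℂ) :
    ∃ C, ∀ a x, InS σ a x → ∀ m,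
      ‖β⁻¹ ^ (m + 1) * wordSum γ (x m).1‖ ≤ ‖β‖⁻¹ ^ (m + 1) * C := by
  obtain ⟨C, hC⟩ := ((Set.finite_iUnion fun c => (σ c).inits.finite_toSet).image
    fun p => ‖wordSum γ p‖).bddAbove
  refine ⟨C, fun a x hx m => ?_⟩
  obtain ⟨c, hc⟩ := hx.exists_isPrefix m
  rw [norm_mul, norm_pow, norm_inv]
  exact mul_le_mul_of_nonneg_left
    (hC ⟨_, Set.mem_iUnion.2 ⟨c, (List.mem_inits _ _).2 hc⟩, rfl⟩) (by positivity)

theorem summable_geometric_succ_mul (hβ : 1 < ‖β‖) (C : ℝ) :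
    Summable fun m : ℕ => ‖β‖⁻¹ ^ (m + 1) * C :=
  ((summable_geometric_of_lt_one (by positivity) (inv_lt_one_of_one_lt₀ hβ)).mul_right
    C).comp_injective (add_left_injective 1)

theorem InS.summable (hβ : 1 < ‖β‖) (hx : InS σ a x) :
    Summable fun m => β⁻¹ ^ (m + 1) * wordSum γ (x m).1 := by
  obtain ⟨C, hC⟩ := exists_norm_zrep_term_le σ β γ
  exact (summable_geometric_succ_mul hβ C).of_norm_bounded (hC a x hx)

theorem exists_forall_norm_zrep_le (hβ : 1 < ‖β‖) :
    ∃ R, ∀ a x, InS σ a x → ‖zrep β γ x‖ ≤ R := by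
  obtain ⟨C, hC⟩ := exists_norm_zrep_term_le σ β γ
  exact ⟨_, fun a x hx => tsum_of_norm_bounded (summable_geometric_succ_mul hβ C).hasSum
    (hC a x hx)⟩

theorem InS.zrep_eq (hβ : 1 < ‖β‖) (hx : InS σ a x) :
    zrep β γ x = β⁻¹ * (wordSum γ (x 0).1 + zrep β γ (shiftS x)) := by
  rw [zrep, (hx.summable hβ).tsum_eq_zero_add, zrep, mul_add, ← tsum_mul_left]
  congr 1
  · ring
  · exact tsum_congr fun m => by simp only [shiftS]; ring

theorem zrep_cons (hβ : 1 < ‖β‖) {p s : List A} {b : A} {y : ℕ → Triple A}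
    (hd : σ a = p ++ b :: s) (hy : InS σ b y) :
    zrep β γ (Stream'.cons (p, b, s) y) = β⁻¹ * (wordSum γ p + zrep β γ y) :=
  (hy.cons hd).zrep_eq hβ

theorem isMinOn_of_mem_ExtPts (hβ : 1 < ‖β‖) {τ z : ℂ} (hz : z ∈ ExtPts σ β γ a τ) :
    IsMinOn (fun w => (τ * w).re) (Frac σ β γ a) z := by
  obtain ⟨R, hR⟩ := exists_forall_norm_zrep_le (σ := σ) (γ := γ) hβ
  have hbdd : BddBelow ((fun w => (τ * w).re) '' Frac σ β γ a) := by
    refine ⟨-(‖τ‖ * R), ?_⟩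
    rintro _ ⟨_, ⟨y, hy, rfl⟩, rfl⟩
    calc -(‖τ‖ * R) ≤ -‖τ * zrep β γ y‖ := by
          rw [norm_mul]; gcongr; exact hR _ y hy
      _ ≤ (τ * zrep β γ y).re := neg_le_of_abs_le (Complex.abs_re_le_norm _)
  intro w hw
  change (τ * z).re ≤ (τ * w).re
  rw [hz.2]
  exact csInf_le hbdd ⟨w, hw, rfl⟩

theorem isMinOn_zrep_shiftS (hβ : 1 < ‖β‖) {τ : ℂ} (hx : InS σ a x)
    (hmin : IsMinOn (fun w => (τ * w).re) (Frac σ β γ a) (zrep β γ x)) :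
    IsMinOn (fun w => (τ * β⁻¹ * w).re) (Frac σ β γ (x 0).2.1) (zrep β γ (shiftS x)) := by
  rintro _ ⟨y, hy, rfl⟩
  have h := hmin ⟨_, hy.cons hx.1, rfl⟩
  change (τ * zrep β γ x).re ≤ (τ * zrep β γ _).re at h
  rw [hx.zrep_eq hβ, zrep_cons hβ hx.1 hy] at h
  simp only [mul_add, ← mul_assoc, Complex.add_re] at h
  exact add_le_add_iff_left _ |>.1 h

theorem isMinOn_zrep_shiftS_iterate (hβ : 1 < ‖β‖) {τ : ℂ} (hx : InS σ a x)
    (hmin : IsMinOn (fun w => (τ * w).re) (Frac σ β γ a) (zrep β γ x)) (n : ℕ) :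
    IsMinOn (fun w => (τ * β⁻¹ ^ (n + 1) * w).re) (Frac σ β γ (x n).2.1)
      (zrep β γ (shiftS^[n + 1] x)) := by
  induction n generalizing τ a x with
  | zero => simpa using isMinOn_zrep_shiftS hβ hx hmin
  | succ n ih =>
    have h := ih hx.shift (isMinOn_zrep_shiftS hβ hx hmin)
    rwa [mul_assoc τ, ← pow_succ'] at h

theorem Frac_subsingleton_of_periodic (hβ : 1 < ‖β‖) (hβ0 : NotRootOfUnity (unitDir β))
    {τ : ℂ} (hτ : τ ≠ 0) (hx : InS σ a x)
    (hmin : IsMinOn (fun w => (τ * w).re) (Frac σ β γ a) (zrep β γ x)) {n₀ q : ℕ} (hq : 0 < q)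
    (hper : Function.Periodic (fun m => x (n₀ + m)) q) :
    (Frac σ β γ (x n₀).2.1).Subsingleton := by
  have hβinv : β⁻¹ ≠ 0 := inv_ne_zero (norm_pos_iff.1 (one_pos.trans hβ))
  have hmin_k : ∀ k : ℕ, IsMinOn (fun w => (τ * β⁻¹ ^ (n₀ + 1) * (β⁻¹ ^ q) ^ k * w).re)
      (Frac σ β γ (x n₀).2.1) (zrep β γ (shiftS^[n₀ + 1] x)) := by
    intro k
    have hletter : x (n₀ + k * q) = x n₀ := by simpa using hper.nat_mul k 0
    have hseq : shiftS^[n₀ + k * q + 1] x = shiftS^[n₀ + 1] x := funext fun m => by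
      simp only [shiftS_iterate_apply]
      calc x (m + (n₀ + k * q + 1)) = x (n₀ + (m + 1 + k * q)) := congrArg x (by ring)
        _ = x (n₀ + (m + 1)) := hper.nat_mul k (m + 1)
        _ = x (m + (n₀ + 1)) := congrArg x (by ring)
    have h := isMinOn_zrep_shiftS_iterate hβ hx hmin (n₀ + k * q)
    rwa [hletter, hseq, show τ * β⁻¹ ^ (n₀ + k * q + 1) = τ * β⁻¹ ^ (n₀ + 1) * (β⁻¹ ^ q) ^ k
      by ring] at h
  refine Set.subsingleton_of_forall_eq (zrep β γ (shiftS^[n₀ + 1] x)) fun z hz => ?_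
  refine sub_eq_zero.1 <| eq_zero_of_forall_re_mul_pow_nonneg (ρ := τ * β⁻¹ ^ (n₀ + 1))
    (η := β⁻¹ ^ q) (mul_ne_zero hτ (pow_ne_zero _ hβinv)) (pow_ne_zero _ hβinv)
    (fun n hn h => ?_) fun k => ?_
  · rw [unitDir_pow, unitDir_inv, ← pow_mul, inv_pow, inv_eq_one] at h
    exact hβ0 _ (Nat.mul_pos hq hn) h
  · have h := hmin_k k hz
    change (_ * zrep β γ _).re ≤ (_ * z).re at h
    rw [mul_sub, Complex.sub_re]
    linarith

end Fractal

section Rigidity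

variable {A : Type} {σ : A → List A} {β : ℂ} {γ : A → ℂ}

theorem Primitive.ne_nil (hprim : Primitive σ) {a : A} (ha : σ a ≠ []) (c : A) : σ c ≠ [] := by
  obtain ⟨n, hn⟩ := hprim
  cases n with
  | zero =>
    have hac : a = c := by simpa [substIter] using hn a c
    exact hac ▸ ha
  | succ n =>
    intro hc
    simpa [substIter, hc] using hn a c

theorem eq_zero_of_comp_eq_mul [Finite A] {f : A → ℂ} {g : A → A} (hβ : 1 < ‖β‖)
    (h : ∀ c, f (g c) = β * f c) : f = 0 := by
  funext c
  have hiter : ∀ k, f (g^[k] c) = β ^ k * f c := fun k => by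
    induction k with
    | zero => simp
    | succ k ih => rw [Function.iterate_succ_apply', h, ih, pow_succ', mul_assoc]
  obtain ⟨i, j, hij, hg⟩ := Finite.exists_ne_map_eq_of_infinite fun k : ℕ => g^[k] c
  have hpow : β ^ i ≠ β ^ j := fun hβij =>
    hij (pow_right_injective₀ (one_pos.trans hβ) hβ.ne' (by simpa using congrArg norm hβij))
  have hfc : β ^ i * f c = β ^ j * f c := by rw [← hiter, ← hiter, hg]
  exact (mul_eq_mul_right_iff.1 hfc).resolve_left hpow

theorem Frac_subsingleton_of_decomp [Finite A] (hβ : 1 < ‖β‖) {c b : A} {p s : List A}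
    (hc : (Frac σ β γ c).Subsingleton) (hd : σ c = p ++ b :: s) :
    (Frac σ β γ b).Subsingleton := by
  rintro _ ⟨y, hy, rfl⟩ _ ⟨y', hy', rfl⟩
  have h := hc ⟨_, hy.cons hd, rfl⟩ ⟨_, hy'.cons hd, rfl⟩
  rw [zrep_cons hβ hd hy, zrep_cons hβ hd hy'] at h
  exact add_left_cancel (mul_left_cancel₀ (inv_ne_zero (norm_pos_iff.1 (one_pos.trans hβ))) h)

theorem Frac_subsingleton_of_mem_substIter [Finite A] (hβ : 1 < ‖β‖) {c b : A} (n : ℕ)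
    (hc : (Frac σ β γ c).Subsingleton) (hb : b ∈ substIter σ n c) :
    (Frac σ β γ b).Subsingleton := by
  induction n generalizing c with
  | zero =>
    rw [substIter, List.mem_singleton] at hb
    exact hb ▸ hc
  | succ n ih =>
    obtain ⟨_, hl, hbl⟩ := List.mem_flatten.1 hb
    obtain ⟨c', hc', rfl⟩ := List.mem_map.1 hl
    obtain ⟨p, s, hps⟩ := List.append_of_mem hc'
    exact ih (Frac_subsingleton_of_decomp hβ hc hps) hbl

theorem substMatrix_mulVec_apply [Fintype A] [DecidableEq A] (c : A) :
    (substMatrix σ).mulVec γ c = wordSum γ (σ c) := by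
  rw [wordSum, Finset.sum_list_map_count, Finset.sum_subset (Finset.subset_univ _)]
  · simp [Matrix.mulVec, dotProduct, substMatrix]
  · intro b _ hb
    rw [List.count_eq_zero_of_not_mem (mt List.mem_toFinset.2 hb), zero_smul]

theorem eq_zero_of_forall_Frac_subsingleton [Fintype A] [DecidableEq A] (hβ : 1 < ‖β‖)
    (hγ : (substMatrix σ).mulVec γ = β • γ) (hne : ∀ c, σ c ≠ [])
    (hsub : ∀ c, (Frac σ β γ c).Subsingleton) : γ = 0 := by
  choose y hy using exists_InS hne
  have hβ0 : β ≠ 0 := norm_pos_iff.1 (one_pos.trans hβ)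
  have hw : ∀ c p b s, σ c = p ++ b :: s →
      zrep β γ (y b) = β * zrep β γ (y c) - wordSum γ p := fun c p b s hd => by
    rw [hsub c ⟨_, hy c, rfl⟩ ⟨_, (hy b).cons hd, rfl⟩, zrep_cons hβ hd (hy b)]
    field_simp
    ring
  have hw0 : (fun c => zrep β γ (y c)) = 0 := eq_zero_of_comp_eq_mul hβ fun c => by
    simpa [wordSum] using hw c [] _ _ (List.cons_head_tail (hne c)).symm
  refine eq_zero_of_comp_eq_mul hβ (g := fun c => (σ c).getLast (hne c)) fun c => ?_
  have hlast := hw c _ _ [] (List.dropLast_append_getLast (hne c)).symm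
  have heig : wordSum γ (σ c) = β * γ c := by
    rw [← substMatrix_mulVec_apply, hγ, Pi.smul_apply, smul_eq_mul]
  rw [← List.dropLast_append_getLast (hne c)] at heig
  simp only [funext_iff, Pi.zero_apply] at hw0
  simp only [wordSum, List.map_append, List.sum_append, List.map_cons, List.map_nil,
    List.sum_cons, List.sum_nil, add_zero] at hlast heig
  rw [hw0, hw0] at hlast
  linear_combination heig - hlast

end Rigidity

end IEMWandering

/-- **Lemma 5.7.** Eventually periodic elements of `𝒮_a` do not produce extreme
points of `𝔉_a` in any direction. -/
theorem periodic_not_extreme {A : Type} [Fintype A] [DecidableEq A]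
    (σ : A → List A) (hprim : IEMWandering.Primitive σ)
    (β : ℂ) (γ : A → ℂ) (hβ : 1 < ‖β‖)
    (hβ0 : IEMWandering.NotRootOfUnity (IEMWandering.unitDir β))
    (hγ : IEMWandering.IsEigenvector σ β γ)
    (a : A) (x : ℕ → IEMWandering.Triple A) (hx : IEMWandering.InS σ a x)
    (hper : ∃ n₀ q : ℕ, 0 < q ∧ ∀ k m : ℕ, m < q → x (n₀ + k * q + m) = x (n₀ + m)) :
    ∀ τ : ℂ, ‖τ‖ = 1 →
      IEMWandering.zrep β γ x ∉ IEMWandering.ExtPts σ β γ a τ := by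
  open IEMWandering in
  intro τ hτ hext
  obtain ⟨n₀, q, hq, hper⟩ := hper
  have hperiodic : Function.Periodic (fun m => x (n₀ + m)) q :=
    Function.periodic_of_forall_mul_add_eq hq fun k m hm => by simpa [add_assoc] using hper k m hm
  have hsub : (Frac σ β γ (x n₀).2.1).Subsingleton :=
    Frac_subsingleton_of_periodic hβ hβ0 (norm_pos_iff.1 (hτ ▸ one_pos)) hx
      (isMinOn_of_mem_ExtPts hβ hext) hq hperiodic
  have hne : ∀ c, σ c ≠ [] := hprim.ne_nil (a := a) (by simp [hx.1])
  obtain ⟨n, hn⟩ := hprim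
  exact hγ.1 (eq_zero_of_forall_Frac_subsingleton hβ hγ.2 hne
    fun b => Frac_subsingleton_of_mem_substIter hβ n hsub (hn b _))
end
end

section
/- Let a ∈ 𝒜 and τ ∈ S¹. Then lim_{t→0⁺} (v_a(τ e^{it}) − v_a(τ))/t = −Im(τ e_a^+(τ)) and lim_{t→0⁻} (v_a(τ e^{it}) − v_a(τ))/t = −Im(τ e_a^−(τ)), where e_a^+(τ) and e_a^−(τ) are the points of E_a(τ) at which z ↦ Im(τ z) is maximal and minimal, respectively. -/
open Complex MeasureTheory Filter Set
open scoped BigOperators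

noncomputable section

/-! `v_a(τ e^{it})` is the minimum over the compact set `𝔉_a` of
`cos t · Re(τz) − sin t · Im(τz)`, so this is Danskin's envelope theorem. Evaluating at `e_a^+(τ)`
bounds the right difference quotient from above. For the lower bound, compactness keeps the points
with `Im(τz) ≥ Im(τ e_a^+(τ)) + ε` a definite distance `δ` above the minimum of `Re(τz)`, which
the rotation by a small angle `t > 0` cannot overcome. The left derivative is the right one for the
reflected pair `(Re(τz), −Im(τz))`. `𝔉_a` is compact as the image of the closed set `𝒮_a` of
sequences in the finite set of decompositions under `z_a`, which is continuous because its series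
converges uniformly when `|β| > 1`. -/

open Topology

section Danskin

variable {X : Type*} [TopologicalSpace X] {K : Set X} {g h : X → ℝ} {e : X}

theorem IsCompact.exists_pos_forall_lt_of_le_add (hK : IsCompact K) (hg : Continuous g)
    (hh : Continuous h) (hgmin : ∀ z ∈ K, g e ≤ g z)
    (hhmax : ∀ z ∈ K, g z = g e → h z ≤ h e) {ε : ℝ} (hε : 0 < ε) :
    ∃ δ > 0, ∀ z ∈ K, g z ≤ g e + δ → h z < h e + ε := by
  set Z := K ∩ {z | h e + ε ≤ h z}
  have hZ : IsCompact Z := hK.inter_right (isClosed_le continuous_const hh)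
  have hgZ : ∀ z ∈ Z, g e < g z := fun z hz =>
    (hgmin z hz.1).lt_of_ne fun hze => by linarith [hhmax z hz.1 hze.symm, hz.2.out]
  obtain ⟨a, hea, ha⟩ := hZ.exists_forall_le' hg.continuousOn hgZ
  refine ⟨(a - g e) / 2, by linarith, fun z hz hzle => ?_⟩
  by_contra! hhz
  linarith [ha z ⟨hz, hhz⟩]

theorem eventually_le_sInf_cos_mul_sub_sin_mul (hK : IsCompact K) (hg : Continuous g)
    (hh : Continuous h) (he : e ∈ K) (hgmin : ∀ z ∈ K, g e ≤ g z)
    (hhmax : ∀ z ∈ K, g z = g e → h z ≤ h e) {ε : ℝ} (hε : 0 < ε) :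
    ∀ᶠ t in 𝓝[>] 0, Real.cos t * g e - Real.sin t * (h e + ε) ≤
      sInf ((fun z => Real.cos t * g z - Real.sin t * h z) '' K) := by
  obtain ⟨δ, hδ, hnear⟩ := hK.exists_pos_forall_lt_of_le_add hg hh hgmin hhmax hε
  obtain ⟨M, hM⟩ := (hK.image hh).bddAbove
  have hfar : ∀ᶠ t in 𝓝[>] (0 : ℝ), Real.sin t * (M - h e - ε) < Real.cos t * δ := by
    have hlim : Tendsto (fun t => Real.cos t * δ - Real.sin t * (M - h e - ε)) (𝓝 0) (𝓝 δ) :=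
      (by fun_prop : Continuous _).tendsto' 0 δ (by simp)
    filter_upwards [nhdsWithin_le_nhds (hlim.eventually (lt_mem_nhds hδ))] with t ht
    linarith
  have hsmall : ∀ᶠ t in 𝓝[>] (0 : ℝ), t ∈ Ioo 0 (Real.pi / 2) :=
    Ioo_mem_nhdsGT (by positivity)
  filter_upwards [hfar, hsmall] with t hfar ⟨ht0, htpi⟩
  have hcos : 0 ≤ Real.cos t := Real.cos_nonneg_of_mem_Icc ⟨by linarith, htpi.le⟩
  have hsin : 0 ≤ Real.sin t := Real.sin_nonneg_of_nonneg_of_le_pi ht0.le (by linarith)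
  refine le_csInf ⟨_, e, he, rfl⟩ ?_
  rintro _ ⟨z, hz, rfl⟩
  rcases le_or_gt (g z) (g e + δ) with hzle | hzgt
  · nlinarith [hgmin z hz, hnear z hz hzle]
  · nlinarith [hM ⟨z, hz, rfl⟩]

theorem tendsto_slope_cos_mul_sub_sin_mul (a c : ℝ) :
    Tendsto (fun t => (Real.cos t * a - Real.sin t * c - a) / t) (𝓝[>] 0) (𝓝 (-c)) := by
  have hderiv : HasDerivAt (fun t => Real.cos t * a - Real.sin t * c)
      (-Real.sin 0 * a - Real.cos 0 * c) 0 :=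
    ((Real.hasDerivAt_cos 0).mul_const a).sub ((Real.hasDerivAt_sin 0).mul_const c)
  have hslope := (hasDerivAt_iff_tendsto_slope.mp hderiv).mono_left
    (nhdsWithin_mono (0 : ℝ) fun t (ht : t ∈ Ioi 0) => ne_of_gt ht)
  simpa using hslope.congr fun t => by simp [slope_def_field]

theorem tendsto_slope_sInf_cos_mul_sub_sin_mul (hK : IsCompact K) (hg : Continuous g)
    (hh : Continuous h) (he : e ∈ K) (hgmin : ∀ z ∈ K, g e ≤ g z)
    (hhmax : ∀ z ∈ K, g z = g e → h z ≤ h e) :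
    Tendsto (fun t => (sInf ((fun z => Real.cos t * g z - Real.sin t * h z) '' K) - g e) / t)
      (𝓝[>] 0) (𝓝 (-h e)) := by
  refine tendsto_order.2 ⟨fun b hb => ?_, fun b hb => ?_⟩
  · set ε := (-h e - b) / 2 with hεdef
    have hε : 0 < ε := by linarith
    filter_upwards [eventually_le_sInf_cos_mul_sub_sin_mul hK hg hh he hgmin hhmax hε,
      (tendsto_order.1 (tendsto_slope_cos_mul_sub_sin_mul (g e) (h e + ε))).1 b (by linarith),
      self_mem_nhdsWithin] with t hlow hb ht
    exact hb.trans_le (div_le_div_of_nonneg_right (by linarith) ht.out.le)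
  · filter_upwards [(tendsto_order.1 (tendsto_slope_cos_mul_sub_sin_mul (g e) (h e))).2 b hb,
      self_mem_nhdsWithin] with t hb ht
    have hbdd : BddBelow ((fun z => Real.cos t * g z - Real.sin t * h z) '' K) :=
      (hK.image (by fun_prop)).bddBelow
    refine lt_of_le_of_lt (div_le_div_of_nonneg_right ?_ ht.out.le) hb
    exact sub_le_sub_right (csInf_le hbdd ⟨e, he, rfl⟩) _

theorem tendsto_slope_sInf_cos_mul_sub_sin_mul_left (hK : IsCompact K) (hg : Continuous g)
    (hh : Continuous h) (he : e ∈ K) (hgmin : ∀ z ∈ K, g e ≤ g z)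
    (hhmin : ∀ z ∈ K, g z = g e → h e ≤ h z) :
    Tendsto (fun t => (sInf ((fun z => Real.cos t * g z - Real.sin t * h z) '' K) - g e) / t)
      (𝓝[<] 0) (𝓝 (-h e)) := by
  have hright := tendsto_slope_sInf_cos_mul_sub_sin_mul (h := fun z => -h z) hK hg hh.neg he hgmin
    fun z hz hze => neg_le_neg (hhmin z hz hze)
  have hneg : Tendsto Neg.neg (𝓝[<] (0 : ℝ)) (𝓝[>] 0) := by
    simpa using tendsto_neg_nhdsLT (a := (0 : ℝ))
  have hleft := (hright.comp hneg).neg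
  rw [neg_neg] at hleft
  refine hleft.congr fun t => ?_
  simp [Real.cos_neg, Real.sin_neg, div_neg, sub_eq_add_neg]

end Danskin

namespace IEMWandering

variable {A : Type}

theorem finite_setOf_append_cons_eq (w : List A) :
    {d : Triple A | d.1 ++ d.2.1 :: d.2.2 = w}.Finite := by
  refine (w.inits.finite_toSet.prod (w.finite_toSet.prod w.tails.finite_toSet)).subset ?_
  rintro ⟨p, c, s⟩ (rfl : p ++ c :: s = _)
  simp

theorem finite_setOf_isDecomp [Finite A] (σ : A → List A) :
    {d : Triple A | ∃ b, IsDecomp σ b d}.Finite := by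
  simpa only [ofPred_exists] using
    finite_iUnion fun b => (finite_setOf_append_cons_eq (σ b)).subset fun d hd => hd.out.symm

theorem InS.exists_isDecomp {σ : A → List A} {a : A} {x : ℕ → Triple A} (hx : InS σ a x) :
    ∀ m, ∃ b, IsDecomp σ b (x m)
  | 0 => ⟨a, hx.1⟩
  | m + 1 => ⟨(x m).2.1, hx.2 m⟩

section DiscreteTriples

variable [TopologicalSpace (Triple A)] [DiscreteTopology (Triple A)]

theorem isClosed_setOf_inS (σ : A → List A) (a : A) :
    IsClosed {x : ℕ → Triple A | InS σ a x} := by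
  simp only [InS, ofPred_and, ofPred_forall]
  exact (isClosed_discrete {d : Triple A | IsDecomp σ a d}).preimage (continuous_apply 0)
    |>.inter <| isClosed_iInter fun m =>
      (isClosed_discrete {d : Triple A × Triple A | IsDecomp σ d.1.2.1 d.2}).preimage
        ((continuous_apply m).prodMk (continuous_apply (m + 1)))

theorem continuousOn_zrep {β : ℂ} (hβ : 1 < ‖β‖) (γ : A → ℂ) {S : Set (ℕ → Triple A)} {C : ℝ}
    (hC : ∀ x ∈ S, ∀ m, ‖wordSum γ (x m).1‖ ≤ C) : ContinuousOn (zrep β γ) S := by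
  have hq : ‖β⁻¹‖ < 1 := by rw [norm_inv]; exact inv_lt_one_of_one_lt₀ hβ
  refine continuousOn_tsum (u := fun m => ‖β⁻¹‖ ^ (m + 1) * C)
    (fun m => ((continuous_of_discreteTopology (f := fun d : Triple A =>
      β⁻¹ ^ (m + 1) * wordSum γ d.1)).comp (continuous_apply m)).continuousOn)
    ((summable_geometric_of_lt_one (norm_nonneg _) hq).comp_injective
      (add_left_injective 1) |>.mul_right C) fun m x hx => ?_
  rw [norm_mul, norm_pow]
  exact mul_le_mul_of_nonneg_left (hC x hx m) (by positivity)

end DiscreteTriples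

theorem isCompact_frac [Finite A] (σ : A → List A) {β : ℂ} (γ : A → ℂ) (hβ : 1 < ‖β‖) (a : A) :
    IsCompact (Frac σ β γ a) := by
  let _ : TopologicalSpace (Triple A) := ⊥
  have : DiscreteTopology (Triple A) := ⟨rfl⟩
  set D := {d : Triple A | ∃ b, IsDecomp σ b d}
  have hD : D.Finite := finite_setOf_isDecomp σ
  obtain ⟨C, hC⟩ := (hD.image fun d => ‖wordSum γ d.1‖).bddAbove
  have hS : IsCompact {x : ℕ → Triple A | InS σ a x} :=
    (isCompact_pi_infinite fun _ => hD.isCompact).of_isClosed_subset (isClosed_setOf_inS σ a)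
      fun x hx => hx.exists_isDecomp
  exact hS.image_of_continuousOn
    (continuousOn_zrep hβ γ fun x hx m => hC ⟨x m, hx.exists_isDecomp m, rfl⟩)

theorem re_mul_exp_mul_I_mul (τ z : ℂ) (t : ℝ) :
    (τ * exp (t * I) * z).re = Real.cos t * (τ * z).re - Real.sin t * (τ * z).im := by
  rw [mul_right_comm, mul_comm, mul_re, exp_ofReal_mul_I_re, exp_ofReal_mul_I_im]

theorem vDir_mul_exp_mul_I (σ : A → List A) (β : ℂ) (γ : A → ℂ) (a : A) (τ : ℂ) (t : ℝ) :
    vDir σ β γ a (τ * exp (t * I)) =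
      sInf ((fun z => Real.cos t * (τ * z).re - Real.sin t * (τ * z).im) '' Frac σ β γ a) := by
  simp only [vDir, re_mul_exp_mul_I_mul]

end IEMWandering

theorem vDir_one_sided_derivatives_general {A : Type} [Fintype A]
    (σ : A → List A)
    (β : ℂ) (γ : A → ℂ) (hβ : 1 < ‖β‖)
    (a : A) (τ : ℂ)
    (ep em : ℂ)
    (hep : ep ∈ IEMWandering.ExtPts σ β γ a τ)
    (hem : em ∈ IEMWandering.ExtPts σ β γ a τ)
    (hepMax : ∀ z ∈ IEMWandering.ExtPts σ β γ a τ, (τ * z).im ≤ (τ * ep).im)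
    (hemMin : ∀ z ∈ IEMWandering.ExtPts σ β γ a τ, (τ * em).im ≤ (τ * z).im) :
    Filter.Tendsto (fun t : ℝ =>
        (IEMWandering.vDir σ β γ a (τ * Complex.exp ((t : ℂ) * Complex.I)) -
          IEMWandering.vDir σ β γ a τ) / t)
      (nhdsWithin 0 (Set.Ioi 0)) (nhds (-(τ * ep).im)) ∧
    Filter.Tendsto (fun t : ℝ =>
        (IEMWandering.vDir σ β γ a (τ * Complex.exp ((t : ℂ) * Complex.I)) -
          IEMWandering.vDir σ β γ a τ) / t)
      (nhdsWithin 0 (Set.Iio 0)) (nhds (-(τ * em).im)) := by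
  open IEMWandering in
  have hK := isCompact_frac σ γ hβ a
  have hre : Continuous fun z : ℂ => (τ * z).re := by fun_prop
  have him : Continuous fun z : ℂ => (τ * z).im := by fun_prop
  have hmin : ∀ e ∈ ExtPts σ β γ a τ, ∀ z ∈ Frac σ β γ a, (τ * e).re ≤ (τ * z).re :=
    fun e he z hz => he.2 ▸ csInf_le (hK.image hre).bddBelow ⟨z, hz, rfl⟩
  simp only [vDir_mul_exp_mul_I]
  constructor
  · rw [← hep.2]
    exact tendsto_slope_sInf_cos_mul_sub_sin_mul hK hre him hep.1 (hmin ep hep)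
      fun z hz hze => hepMax z ⟨hz, hze.trans hep.2⟩
  · rw [← hem.2]
    exact tendsto_slope_sInf_cos_mul_sub_sin_mul_left hK hre him hem.1 (hmin em hem)
      fun z hz hze => hemMin z ⟨hz, hze.trans hem.2⟩

/-- **Lemma 6.4** (one-sided derivatives of `v_a`). For `a ∈ 𝒜` and `τ ∈ S¹`,
`lim_{t→0⁺} (v_a(τe^{it}) − v_a(τ))/t = −Im(τ e_a⁺(τ))` and
`lim_{t→0⁻} (v_a(τe^{it}) − v_a(τ))/t = −Im(τ e_a⁻(τ))`, where `e_a⁺(τ)`, `e_a⁻(τ)`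
are the points of `E_a(τ)` where `z ↦ Im(τz)` is maximal resp. minimal. -/
theorem vDir_one_sided_derivatives {A : Type} [Fintype A] [DecidableEq A]
    (σ : A → List A) (hprim : IEMWandering.Primitive σ)
    (β : ℂ) (γ : A → ℂ) (hβ : 1 < ‖β‖)
    (hγ : IEMWandering.IsEigenvector σ β γ)
    (a : A) (τ : ℂ) (hτ : ‖τ‖ = 1)
    (ep em : ℂ)
    (hep : ep ∈ IEMWandering.ExtPts σ β γ a τ)
    (hem : em ∈ IEMWandering.ExtPts σ β γ a τ)
    (hepMax : ∀ z ∈ IEMWandering.ExtPts σ β γ a τ, (τ * z).im ≤ (τ * ep).im)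
    (hemMin : ∀ z ∈ IEMWandering.ExtPts σ β γ a τ, (τ * em).im ≤ (τ * z).im) :
    Filter.Tendsto (fun t : ℝ =>
        (IEMWandering.vDir σ β γ a (τ * Complex.exp ((t : ℂ) * Complex.I)) -
          IEMWandering.vDir σ β γ a τ) / t)
      (nhdsWithin 0 (Set.Ioi 0)) (nhds (-(τ * ep).im)) ∧
    Filter.Tendsto (fun t : ℝ =>
        (IEMWandering.vDir σ β γ a (τ * Complex.exp ((t : ℂ) * Complex.I)) -
          IEMWandering.vDir σ β γ a τ) / t)
      (nhdsWithin 0 (Set.Iio 0)) (nhds (-(τ * em).im)) :=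
  vDir_one_sided_derivatives_general σ β γ hβ a τ ep em hep hem hepMax hemMin
end
end
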